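/- Let e ≥ 5 be an integer. Define φ : ℤ_{2^e} → ℤ_{2^e} by φ(x) = −x − 2^{e−3}·x(x−1) (mod 2^e), and π(x) = 1 − 2x (mod 8). Then φ is a skew morphism of ℤ_{2^e} of order 8 with power function π, and φ is not smooth: there exists x with π(φ(x)) ≢ π(x) (mod 8). -/

import Mathlib

def IsAddSkewMorphism {A : Type*} [AddGroup A] (φ : Equiv.Perm A) (π : A → ℤ) : Prop :=
  φ 0 = 0 ∧ ∀ x y : A, φ (x + y) = φ x + (φ ^ π x) y

def IsAddSmooth {A : Type*} [AddGroup A] (φ : Equiv.Perm A) (π : A → ℤ) : Prop :=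
  ∀ x : A, π (φ x) ≡ π x [ZMOD (orderOf φ)]

/-!
Over any commutative ring `R` with an element `c` such that `c² x (x - 1) = 0` for all `x`
(in particular `2c² = 0`, so `(2c)² = 0`), the map `φ x = -x - c x (x - 1)` satisfies
`φ (φ x) = (1 - 2c) x` and `φ (x + y) = φ x + φ ((1 + 2cx) y)`. Hence `φ²` is multiplication by the
unit `1 - 2c`, whose inverse is `1 + 2c`, so `φ^(1 - 2k) y = φ ((1 + 2kc) y)`; this is the skew
morphism identity with power function `1 - 2x`. Moreover `φ⁴` and `φ⁸` are multiplication by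
`1 - 4c` and `1 - 8c`. For `R = ℤ/2^e` and `c = 2^(e-3)` this gives order `8`, and
`φ 1 = -1` breaks smoothness, since `π (-1) = 3` and `π 1 = -1` modulo `8`.
-/

section SkewMap

variable {R : Type*} [CommRing R] {c : R}

def skewMap (c x : R) : R := -x - c * (x * (x - 1))

@[simp]
lemma skewMap_zero : skewMap c 0 = 0 := by simp [skewMap]

lemma skewMap_one : skewMap c 1 = -1 := by simp [skewMap]

lemma skewMap_add (h : 2 * c ^ 2 = 0) (x y : R) :
    skewMap c (x + y) = skewMap c x + skewMap c ((1 + 2 * c * x) * y) := by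
  unfold skewMap
  linear_combination (2 * x * y ^ 2 + 2 * c * x ^ 2 * y ^ 2 - x * y) * h

variable (hc : ∀ x : R, c ^ 2 * (x * (x - 1)) = 0)
include hc

lemma two_mul_sq_eq_zero_of_forall : 2 * c ^ 2 = 0 := by
  linear_combination hc (-1)

lemma skewMap_skewMap (x : R) : skewMap c (skewMap c x) = (1 - 2 * c) * x := by
  unfold skewMap
  linear_combination (-(2 * x) - c * (x * (x - 1)) - 1) * hc x

lemma one_sub_two_mul_mul_one_add_two_mul : (1 - 2 * c) * (1 + 2 * c) = 1 := by
  linear_combination -2 * two_mul_sq_eq_zero_of_forall hc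

lemma skewMap_bijective : Function.Bijective (skewMap c) := by
  have hu := one_sub_two_mul_mul_one_add_two_mul hc
  refine ⟨fun a b hab => ?_, fun y => ⟨skewMap c ((1 + 2 * c) * y), ?_⟩⟩
  · have h := congrArg (fun z => (1 + 2 * c) * skewMap c z) hab
    simp only [skewMap_skewMap hc] at h
    linear_combination (b - a) * hu + h
  · rw [skewMap_skewMap hc]
    linear_combination y * hu

noncomputable def skewPerm : Equiv.Perm R := Equiv.ofBijective _ (skewMap_bijective hc)

@[simp]
lemma skewPerm_apply (x : R) : skewPerm hc x = skewMap c x := rfl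

lemma skewPerm_zpow_two_mul_apply (k : ℤ) (y : R) :
    (skewPerm hc ^ (2 * k)) y = (1 - 2 * k * c) * y := by
  have h2 := two_mul_sq_eq_zero_of_forall hc
  have hsq (z : R) : (skewPerm hc ^ (2 : ℤ)) z = (1 - 2 * c) * z := by
    simp [zpow_ofNat, sq, skewMap_skewMap hc]
  induction k using Int.induction_on generalizing y with
  | zero => simp
  | succ k ih =>
    rw [mul_add, mul_one, zpow_add, Equiv.Perm.mul_apply, hsq, ih]
    push_cast
    linear_combination 2 * k * y * h2
  | pred k ih =>
    apply (skewPerm hc ^ (2 : ℤ)).injective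
    rw [← Equiv.Perm.mul_apply, ← zpow_add, hsq, show 2 + 2 * (-(k : ℤ) - 1) = 2 * -k by ring, ih]
    push_cast
    linear_combination 2 * (k + 1) * y * h2

lemma isAddSkewMorphism_skewPerm (k : R → ℤ) (hk : ∀ x, (k x : R) = x) :
    IsAddSkewMorphism (skewPerm hc) fun x => 1 - 2 * k x := by
  refine ⟨skewMap_zero, fun x y => ?_⟩
  dsimp only
  rw [sub_eq_add_neg, zpow_add, zpow_one, ← mul_neg, Equiv.Perm.mul_apply,
    skewPerm_zpow_two_mul_apply, skewPerm_apply, skewPerm_apply, skewPerm_apply,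
    skewMap_add (two_mul_sq_eq_zero_of_forall hc)]
  push_cast
  rw [hk]
  congr 2
  ring

lemma orderOf_skewPerm (h8 : 8 * c = 0) (h4 : 4 * c ≠ 0) : orderOf (skewPerm hc) = 8 := by
  have hpow (k : ℕ) (y : R) : (skewPerm hc ^ (2 * k)) y = (1 - 2 * k * c) * y := by
    exact_mod_cast skewPerm_zpow_two_mul_apply hc k y
  refine orderOf_eq_prime_pow (p := 2) (n := 2) (fun h => h4 ?_) (Equiv.ext fun y => ?_)
  · have h1 := congrArg (· 1) h
    simp only [show 2 ^ 2 = 2 * 2 from rfl, hpow, Equiv.Perm.one_apply] at h1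
    push_cast at h1
    linear_combination -h1
  · rw [show 2 ^ (2 + 1) = 2 * 4 from rfl, hpow, Equiv.Perm.one_apply]
    push_cast
    linear_combination -y * h8

end SkewMap

namespace ZMod

lemma even_mul_sub_one {n : ℕ} (x : ZMod n) : Even (x * (x - 1)) := by
  obtain ⟨a, rfl⟩ := intCast_surjective x
  exact_mod_cast (Int.even_mul_pred_self a).map (Int.castRingHom (ZMod n))

lemma two_pow_eq_zero_iff {e k : ℕ} : (2 : ZMod (2 ^ e)) ^ k = 0 ↔ e ≤ k := by
  rw [← Nat.pow_dvd_pow_iff_le_right (by norm_num : 1 < 2), ← natCast_eq_zero_iff]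
  push_cast
  rfl

lemma sq_two_pow_sub_three_mul_mul_sub_one {e : ℕ} (he : 5 ≤ e) (x : ZMod (2 ^ e)) :
    ((2 : ZMod (2 ^ e)) ^ (e - 3)) ^ 2 * (x * (x - 1)) = 0 := by
  obtain ⟨t, ht⟩ := even_mul_sub_one x
  have h : (2 : ZMod (2 ^ e)) ^ (2 * (e - 3) + 1) = 0 := two_pow_eq_zero_iff.2 (by omega)
  rw [ht, ← two_mul]
  linear_combination t * h

lemma val_intCast_modEq_of_dvd {m n : ℕ} [NeZero n] (hmn : m ∣ n) (a : ℤ) :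
    ((a : ZMod n).val : ℤ) ≡ a [ZMOD m] := by
  rw [val_intCast]
  exact Int.emod_emod_of_dvd a (Int.natCast_dvd_natCast.2 hmn)

lemma one_sub_two_mul_val_neg_one_not_modEq {n : ℕ} [NeZero n] (h8 : 8 ∣ n) :
    ¬ (1 - 2 * ((-1 : ZMod n).val : ℤ) ≡ 1 - 2 * ((1 : ZMod n).val : ℤ) [ZMOD (8 : ℕ)]) := by
  intro h
  have hneg := val_intCast_modEq_of_dvd h8 (-1)
  have hone := val_intCast_modEq_of_dvd h8 1
  push_cast at hneg hone
  have := ((hneg.mul_left 2).sub_left 1).symm.trans (h.trans ((hone.mul_left 2).sub_left 1))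
  norm_num [Int.ModEq] at this

end ZMod

theorem stmt8 (e : ℕ) (he : 5 ≤ e) :
    ∃ φ : Equiv.Perm (ZMod (2 ^ e)),
      (∀ x : ZMod (2 ^ e),
        φ x = -x - (2 : ZMod (2 ^ e)) ^ (e - 3) * (x * (x - 1))) ∧
      IsAddSkewMorphism φ (fun x => 1 - 2 * (x.val : ℤ)) ∧
      orderOf φ = 8 ∧
      ∃ x : ZMod (2 ^ e),
        ¬ ((1 - 2 * (((φ x).val : ℤ))) ≡ (1 - 2 * ((x.val : ℤ))) [ZMOD (8 : ℕ)]) := by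
  have hc := ZMod.sq_two_pow_sub_three_mul_mul_sub_one he
  have hpow (k : ℕ) (hk : k ≤ 3) :
      (2 : ZMod (2 ^ e)) ^ k * 2 ^ (e - 3) = 2 ^ (e - (3 - k)) := by
    rw [← pow_add]; congr 1; omega
  refine ⟨skewPerm hc, fun x => rfl,
    isAddSkewMorphism_skewPerm hc _ fun x => by simp, orderOf_skewPerm hc ?_ ?_, 1, ?_⟩
  · rw [show (8 : ZMod (2 ^ e)) = 2 ^ 3 by norm_num, hpow 3 le_rfl, ZMod.two_pow_eq_zero_iff]
    omega
  · rw [show (4 : ZMod (2 ^ e)) = 2 ^ 2 by norm_num, hpow 2 (by norm_num), Ne, ZMod.two_pow_eq_zero_iff]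
    omega
  · rw [skewPerm_apply, skewMap_one]
    exact ZMod.one_sub_two_mul_val_neg_one_not_modEq (pow_dvd_pow 2 (by omega : 3 ≤ e))
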